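/- Let f : ℝ → ℝ be continuously differentiable with bounded derivative, |f'| ≤ M. Then the superposition (Nemytskii) operator F : C(K) → C(K), F(ζ) = f ∘ ζ, on the space of continuous functions on a compact space K, is Fréchet differentiable at every ζ̄ ∈ C(K), with derivative h ↦ (f' ∘ ζ̄)·h, provided f' is additionally uniformly continuous on bounded intervals (e.g., Lipschitz on bounded sets). -/

import Mathlib

/-!
If `f'` is `L`-Lipschitz on `[-R, R]`, the mean value inequality gives the quadratic Taylor bound
`|f b - f a - f' a (b - a)| ≤ L |b - a|²` for `a, b ∈ [-R, R]`. With `R = ‖ζb‖ + 1` and `‖h‖ ≤ 1`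
this applies pointwise at every `k ∈ K`, so the remainder
`‖f ∘ (ζb + h) - f ∘ ζb - (f' ∘ ζb) h‖` is at most `L ‖h‖²`, which is `o(‖h‖)`.
-/

open Asymptotics Metric Topology

theorem norm_sub_sub_smul_le_of_lipschitz_deriv {E : Type*} [NormedAddCommGroup E]
    [NormedSpace ℝ E] {f f' : ℝ → E} {s : Set ℝ} {L : ℝ} (hL : 0 ≤ L)
    (hf : ∀ x, HasDerivAt f (f' x) x) (hs : Convex ℝ s)
    (hLip : ∀ x ∈ s, ∀ y ∈ s, ‖f' x - f' y‖ ≤ L * ‖x - y‖) {a b : ℝ} (ha : a ∈ s) (hb : b ∈ s) :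
    ‖f b - f a - (b - a) • f' a‖ ≤ L * ‖b - a‖ ^ 2 := by
  have hderiv : ∀ z ∈ segment ℝ a b,
      HasDerivWithinAt (fun z => f z - z • f' a) (f' z - f' a) (segment ℝ a b) z := fun z _ =>
    ((hf z).sub ((hasDerivAt_id z).smul_const (f' a))).hasDerivWithinAt.congr_deriv (by simp)
  have hbound : ∀ z ∈ segment ℝ a b, ‖f' z - f' a‖ ≤ L * ‖b - a‖ := fun z hz =>
    (hLip z (hs.segment_subset ha hb hz) a ha).trans
      (mul_le_mul_of_nonneg_left (norm_sub_le_of_mem_segment hz) hL)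
  calc ‖f b - f a - (b - a) • f' a‖ = ‖(f b - b • f' a) - (f a - a • f' a)‖ := by
        rw [sub_smul]; congr 1; abel
    _ ≤ L * ‖b - a‖ * ‖b - a‖ :=
        (convex_segment a b).norm_image_sub_le_of_norm_hasDerivWithin_le hderiv hbound
          (left_mem_segment ℝ a b) (right_mem_segment ℝ a b)
    _ = L * ‖b - a‖ ^ 2 := by ring

theorem ContinuousMap.norm_comp_add_sub_comp_sub_mul_le {K : Type*} [TopologicalSpace K]
    [CompactSpace K] (f f' : C(ℝ, ℝ)) {L R : ℝ} (hL : 0 ≤ L)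
    (htaylor : ∀ a ∈ closedBall (0 : ℝ) R, ∀ b ∈ closedBall (0 : ℝ) R,
      ‖f b - f a - (b - a) * f' a‖ ≤ L * ‖b - a‖ ^ 2)
    {ζ h : C(K, ℝ)} (hζ : ‖ζ‖ ≤ R) (hζh : ‖ζ + h‖ ≤ R) :
    ‖f.comp (ζ + h) - f.comp ζ - f'.comp ζ * h‖ ≤ L * ‖h‖ ^ 2 := by
  refine (ContinuousMap.norm_le _ (by positivity)).2 fun k => ?_
  have hmem : ∀ g : C(K, ℝ), ‖g‖ ≤ R → g k ∈ closedBall (0 : ℝ) R := fun g hg =>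
    mem_closedBall_zero_iff.2 ((g.norm_coe_le_norm k).trans hg)
  calc ‖f (ζ k + h k) - f (ζ k) - f' (ζ k) * h k‖
      = ‖f ((ζ + h) k) - f (ζ k) - ((ζ + h) k - ζ k) * f' (ζ k)‖ := by
        simp only [ContinuousMap.add_apply, add_sub_cancel_left, mul_comm]
    _ ≤ L * ‖h k‖ ^ 2 := by
        simpa using htaylor _ (hmem ζ hζ) _ (hmem _ hζh)
    _ ≤ L * ‖h‖ ^ 2 := by gcongr; exact h.norm_coe_le_norm k

theorem stmt14_general {K : Type*} [TopologicalSpace K] [CompactSpace K]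
    (f f' : ℝ → ℝ)
    (hf : ∀ x : ℝ, HasDerivAt f (f' x) x)
    (hLip : ∀ R : ℝ, 0 < R → ∃ L : ℝ, ∀ x y : ℝ, |x| ≤ R → |y| ≤ R →
      |f' x - f' y| ≤ L * |x - y|)
    (hfc : Continuous f) (hf'c : Continuous f')
    (ζb : C(K, ℝ)) :
    HasFDerivAt (fun ζ : C(K, ℝ) => (⟨f, hfc⟩ : C(ℝ, ℝ)).comp ζ)
      ((ContinuousLinearMap.mul ℝ C(K, ℝ)) ((⟨f', hf'c⟩ : C(ℝ, ℝ)).comp ζb)) ζb := by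
  set R := ‖ζb‖ + 1
  obtain ⟨L, hL⟩ := hLip R (by positivity)
  have hLip' : ∀ x ∈ closedBall (0 : ℝ) R, ∀ y ∈ closedBall (0 : ℝ) R,
      ‖f' x - f' y‖ ≤ max L 0 * ‖x - y‖ := fun x hx y hy => by
    simp only [mem_closedBall_zero_iff, Real.norm_eq_abs] at hx hy ⊢
    exact (hL x y hx hy).trans (by gcongr; exact le_max_left L 0)
  have hremainder : (fun h : C(K, ℝ) => ‖h‖ ^ 2) =o[𝓝 0] fun h => h :=
    isLittleO_norm_pow_id one_lt_two
  rw [hasFDerivAt_iff_isLittleO_nhds_zero]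
  refine (IsBigO.of_bound (max L 0) ?_).trans_isLittleO hremainder
  filter_upwards [closedBall_mem_nhds (0 : C(K, ℝ)) one_pos] with h hh
  rw [mem_closedBall_zero_iff] at hh
  rw [norm_pow, norm_norm, ContinuousLinearMap.mul_apply']
  exact ContinuousMap.norm_comp_add_sub_comp_sub_mul_le ⟨f, hfc⟩ ⟨f', hf'c⟩ (le_max_right L 0)
    (fun a ha b hb => by
      simpa [smul_eq_mul] using
        norm_sub_sub_smul_le_of_lipschitz_deriv (le_max_right L 0) hf (convex_closedBall 0 R)
          hLip' ha hb)
    (by linarith) ((norm_add_le _ _).trans (by linarith))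

/-- The Nemytskii operator `F(ζ) = f ∘ ζ` on `C(K)` induced by a `C¹` function `f` with
bounded derivative `f'` that is Lipschitz on bounded intervals is Fréchet differentiable
at every `ζb`, with derivative the multiplication operator `h ↦ (f' ∘ ζb)·h`. -/
theorem stmt14 {K : Type*} [TopologicalSpace K] [CompactSpace K]
    (f f' : ℝ → ℝ) (M : ℝ)
    (hf : ∀ x : ℝ, HasDerivAt f (f' x) x)
    (hM : ∀ x : ℝ, |f' x| ≤ M)
    (hLip : ∀ R : ℝ, 0 < R → ∃ L : ℝ, ∀ x y : ℝ, |x| ≤ R → |y| ≤ R →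
      |f' x - f' y| ≤ L * |x - y|)
    (hfc : Continuous f) (hf'c : Continuous f')
    (ζb : C(K, ℝ)) :
    HasFDerivAt (fun ζ : C(K, ℝ) => (⟨f, hfc⟩ : C(ℝ, ℝ)).comp ζ)
      ((ContinuousLinearMap.mul ℝ C(K, ℝ)) ((⟨f', hf'c⟩ : C(ℝ, ℝ)).comp ζb)) ζb :=
  stmt14_general f f' hf hLip hfc hf'c ζb
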